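/- The (2N+1)×(2N+1) matrix A with entries A_{j,k} = π²/3 for j = k and A_{j,k} = 2(-1)^{k-j}/(k-j)² for j ≠ k (indices -N ≤ j,k ≤ N) is symmetric positive definite. -/

import Mathlib

/-!
The entries are Fourier coefficients of the weight `t²` on `[-π, π]`:
`A_{jk} = (2π)⁻¹ ∫ t² cos((k - j) t) dt`. Hence for real `x`,
`xᵀ A x = (2π)⁻¹ ∫ t² |∑ⱼ xⱼ e^{i j t}|² dt ≥ 0`, and equality forces the trigonometric
polynomial `∑ⱼ xⱼ e^{i j t}` to vanish almost everywhere on `[-π, π]`, so all its coefficients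
vanish by orthogonality of the characters.
-/

open Real MeasureTheory Matrix

lemma integral_cos_int_mul (n : ℤ) :
    ∫ t in -π..π, cos (n * t) = if n = 0 then 2 * π else 0 := by
  split_ifs with hn
  · simp [hn, two_mul]
  · rw [intervalIntegral.integral_comp_mul_left cos (Int.cast_ne_zero.mpr hn), integral_cos,
      mul_neg, sin_neg, sin_int_mul_pi]
    simp

lemma integral_sq_mul_cos_int_mul (n : ℤ) :
    ∫ t in -π..π, t ^ 2 * cos (n * t) =
      if n = 0 then 2 * π ^ 3 / 3 else 4 * π * (-1) ^ n / n ^ 2 := by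
  split_ifs with hn
  · simp only [hn, Int.cast_zero, zero_mul, cos_zero, mul_one, integral_pow]
    ring
  have hc : (n : ℝ) ≠ 0 := Int.cast_ne_zero.mpr hn
  -- integrate by parts twice
  have hderiv (t : ℝ) : HasDerivAt
      (fun t ↦ t ^ 2 * sin (n * t) / n + 2 * t * cos (n * t) / n ^ 2 - 2 * sin (n * t) / n ^ 3)
      (t ^ 2 * cos (n * t)) t := by
    have hlin : HasDerivAt (fun t : ℝ ↦ n * t) n t := by
      simpa using (hasDerivAt_id t).const_mul (n : ℝ)
    have hsin := (hasDerivAt_sin _).comp t hlin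
    have hcos := (hasDerivAt_cos _).comp t hlin
    refine ((((hasDerivAt_pow 2 t).mul hsin).div_const _).add
      ((((hasDerivAt_id t).const_mul 2).mul hcos).div_const _) |>.sub
      ((hsin.const_mul 2).div_const _)).congr_deriv ?_
    simp only [Function.comp_apply, id]
    field_simp
    ring
  rw [intervalIntegral.integral_eq_sub_of_hasDerivAt (fun t _ ↦ hderiv t)
      (by apply Continuous.intervalIntegrable; fun_prop),
    mul_neg, sin_neg, cos_neg, sin_int_mul_pi, cos_int_mul_pi]
  field_simp
  ring

section CosineToeplitz

variable {ι : Type*}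

noncomputable def cosineToeplitzMatrix (w : ℝ → ℝ) (ν : ι → ℤ) : Matrix ι ι ℝ :=
  Matrix.of fun j k ↦ ∫ t in -π..π, w t * cos ((ν k - ν j : ℤ) * t)

lemma isHermitian_cosineToeplitzMatrix (w : ℝ → ℝ) (ν : ι → ℤ) :
    (cosineToeplitzMatrix w ν).IsHermitian := by
  ext j k
  simp only [cosineToeplitzMatrix, conjTranspose_apply, of_apply, star_trivial]
  congr 1 with t
  rw [← cos_neg, ← neg_mul, ← Int.cast_neg, neg_sub]

variable [Fintype ι]

lemma sum_sum_mul_cos_sub (x θ : ι → ℝ) :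
    ∑ j, ∑ k, x j * x k * cos (θ k - θ j) =
      (∑ j, x j * cos (θ j)) ^ 2 + (∑ j, x j * sin (θ j)) ^ 2 := by
  simp only [sq, Finset.sum_mul_sum, ← Finset.sum_add_distrib, cos_sub]
  exact Finset.sum_congr rfl fun j _ ↦ Finset.sum_congr rfl fun k _ ↦ by ring

lemma sum_mul_cos_mul_cos_add_sum_mul_sin_mul_sin (x θ : ι → ℝ) (φ : ℝ) :
    (∑ j, x j * cos (θ j)) * cos φ + (∑ j, x j * sin (θ j)) * sin φ =
      ∑ j, x j * cos (θ j - φ) := by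
  simp only [Finset.sum_mul, ← Finset.sum_add_distrib, cos_sub]
  exact Finset.sum_congr rfl fun j _ ↦ by ring

variable {ν : ι → ℤ}

lemma integral_sum_mul_cos_int_sub_mul (hν : Function.Injective ν) (x : ι → ℝ) (m : ι) :
    ∫ t in -π..π, ∑ j, x j * cos ((ν j - ν m : ℤ) * t) = 2 * π * x m := by
  classical
  rw [intervalIntegral.integral_finsetSum fun j _ ↦ by
    apply Continuous.intervalIntegrable; fun_prop]
  simp only [intervalIntegral.integral_const_mul, integral_cos_int_mul, sub_eq_zero, hν.eq_iff,
    mul_ite, mul_zero, Finset.sum_ite_eq', Finset.mem_univ, if_true]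
  ring

lemma eq_zero_of_ae_sum_mul_cos_eq_zero_and_sum_mul_sin_eq_zero (hν : Function.Injective ν)
    {x : ι → ℝ} (h : ∀ᵐ t ∂volume.restrict (Set.Ioc (-π) π),
      ∑ j, x j * cos (ν j * t) = 0 ∧ ∑ j, x j * sin (ν j * t) = 0) :
    x = 0 := by
  funext m
  have hzero : ∫ t in -π..π, ∑ j, x j * cos ((ν j - ν m : ℤ) * t) = 0 := by
    rw [intervalIntegral.integral_of_le (by linarith [pi_pos])]
    refine integral_eq_zero_of_ae ?_
    filter_upwards [h] with t ⟨hcos, hsin⟩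
    simp only [Int.cast_sub, sub_mul]
    rw [← sum_mul_cos_mul_cos_add_sum_mul_sin_mul_sin, hcos, hsin]
    simp
  rw [integral_sum_mul_cos_int_sub_mul hν] at hzero
  simpa [pi_ne_zero] using hzero

variable {w : ℝ → ℝ}

lemma dotProduct_mulVec_cosineToeplitzMatrix (hw : Continuous w) (x : ι → ℝ) :
    x ⬝ᵥ (cosineToeplitzMatrix w ν *ᵥ x) =
      ∫ t in -π..π, w t * ((∑ j, x j * cos (ν j * t)) ^ 2 + (∑ j, x j * sin (ν j * t)) ^ 2) := by
  simp_rw [← sum_sum_mul_cos_sub, Finset.mul_sum]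
  rw [intervalIntegral.integral_finsetSum fun j _ ↦ by
    apply Continuous.intervalIntegrable; fun_prop]
  refine Finset.sum_congr rfl fun j _ ↦ ?_
  rw [intervalIntegral.integral_finsetSum fun k _ ↦ by
    apply Continuous.intervalIntegrable; fun_prop, mulVec, dotProduct, Finset.mul_sum]
  refine Finset.sum_congr rfl fun k _ ↦ ?_
  rw [cosineToeplitzMatrix, of_apply, ← intervalIntegral.integral_mul_const,
    ← intervalIntegral.integral_const_mul]
  congr 1 with t
  push_cast
  ring_nf

theorem posDef_cosineToeplitzMatrix (hν : Function.Injective ν) (hw : Continuous w)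
    (hw_nonneg : ∀ t, 0 ≤ w t) (hw_ae : ∀ᵐ t, w t ≠ 0) :
    (cosineToeplitzMatrix w ν).PosDef := by
  refine posDef_iff_dotProduct_mulVec.mpr ⟨isHermitian_cosineToeplitzMatrix w ν, fun x hx ↦ ?_⟩
  rw [star_trivial, dotProduct_mulVec_cosineToeplitzMatrix hw]
  have hπ : -π ≤ π := by linarith [pi_pos]
  have hf_nonneg (t : ℝ) :
      0 ≤ w t * ((∑ j, x j * cos (ν j * t)) ^ 2 + (∑ j, x j * sin (ν j * t)) ^ 2) :=
    mul_nonneg (hw_nonneg t) (by positivity)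
  refine (intervalIntegral.integral_nonneg hπ fun t _ ↦ hf_nonneg t).lt_of_ne' fun h ↦ hx ?_
  rw [intervalIntegral.integral_eq_zero_iff_of_le_of_nonneg_ae hπ (.of_forall hf_nonneg)
    (by apply Continuous.intervalIntegrable; fun_prop)] at h
  refine eq_zero_of_ae_sum_mul_cos_eq_zero_and_sum_mul_sin_eq_zero hν ?_
  filter_upwards [h, ae_restrict_of_ae hw_ae] with t ht hwt
  have hsq := (mul_eq_zero.mp ht).resolve_left hwt
  rw [add_eq_zero_iff_of_nonneg (sq_nonneg _) (sq_nonneg _)] at hsq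
  exact ⟨pow_eq_zero_iff two_ne_zero |>.mp hsq.1, pow_eq_zero_iff two_ne_zero |>.mp hsq.2⟩

end CosineToeplitz

theorem negative_sinc_second_derivative_matrix_posDef (N : ℕ) :
    (Matrix.of (fun j k : ↥(Finset.Icc (-(N : ℤ)) (N : ℤ)) =>
      if j = k then Real.pi ^ 2 / 3
      else 2 * (-1 : ℝ) ^ ((k : ℤ) - (j : ℤ)) / (((k : ℤ) : ℝ) - ((j : ℤ) : ℝ)) ^ 2)).PosDef := by
  have hA := (posDef_cosineToeplitzMatrix (w := (· ^ 2))
    (Subtype.val_injective (p := (· ∈ Finset.Icc (-(N : ℤ)) N)))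
    (continuous_pow 2) sq_nonneg ((volume.ae_ne 0).mono fun _ ↦ pow_ne_zero 2)).smul
    (inv_pos.mpr two_pi_pos)
  convert hA using 1
  ext j k
  simp only [cosineToeplitzMatrix, of_apply, Matrix.smul_apply, smul_eq_mul,
    integral_sq_mul_cos_int_mul, sub_eq_zero, Subtype.ext_iff, eq_comm (a := (j : ℤ))]
  split_ifs
  · field_simp
  · push_cast
    field_simp
    norm_num
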